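/- arXiv:1809.03797 — 2 statements merged into one kernel-verified Lean document; each statement's English description precedes it below -/
import Mathlib

section
/- Let f be a graphon parameter that is convex (meaning: for all α_1,…,α_k ∈ [0,1] with ∑_i α_i = 1 and all graphons W, W_1,…,W_k with W = ∑_i α_i W_i, one has f(W) ≤ ∑_i α_i f(W_i)) and continuous with respect to the L¹ norm on graphons. Then f is cut distance compatible: U ⪯ W implies f(U) ≤ f(W). -/
open MeasureTheory

attribute [local instance] Classical.propDecidable

noncomputable section

/-- The unit interval `[0,1]`, equipped with the (restricted) Lebesgue measure. -/
abbrev UI : Type := Set.Icc (0:ℝ) 1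

/-- A graphon: a symmetric measurable function `[0,1]² → [0,1]`. -/
def IsGraphon (W : UI → UI → ℝ) : Prop :=
  Measurable (Function.uncurry W) ∧ (∀ x y, W x y = W y x) ∧
    ∀ x y, W x y ∈ Set.Icc (0:ℝ) 1

/-- A kernel: a bounded symmetric measurable function `[0,1]² → ℝ`. -/
def IsKernel (W : UI → UI → ℝ) : Prop :=
  Measurable (Function.uncurry W) ∧ (∀ x y, W x y = W y x) ∧
    ∃ C : ℝ, ∀ x y, |W x y| ≤ C

/-- The cut norm `‖W‖_□`. -/
def cutNorm (W : UI → UI → ℝ) : ℝ :=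
  sSup { r : ℝ | ∃ S T : Set UI, MeasurableSet S ∧ MeasurableSet T ∧
    r = |∫ x in S, ∫ y in T, W x y| }

/-- A measure preserving bijection of `[0,1]`. -/
structure MPB where
  toFun : UI → UI
  bijective : Function.Bijective toFun
  measurePreserving : MeasurePreserving toFun

/-- The version `W^φ` of `W`. -/
def vers (W : UI → UI → ℝ) (φ : UI → UI) : UI → UI → ℝ := fun x y => W (φ x) (φ y)

/-- The cut distance `δ_□(U,W)`. -/
def cutDist (U W : UI → UI → ℝ) : ℝ :=
  ⨅ φ : MPB, cutNorm (fun x y => U x y - vers W φ.toFun x y)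

/-- Weak* convergence of a sequence of (bounded measurable) functions on `[0,1]²`:
convergence of integrals over all products of measurable sets. -/
def WeakStarTendsto (Wn : ℕ → UI → UI → ℝ) (W : UI → UI → ℝ) : Prop :=
  ∀ S T : Set UI, MeasurableSet S → MeasurableSet T →
    Filter.Tendsto (fun n => ∫ x in S, ∫ y in T, Wn n x y) Filter.atTop
      (nhds (∫ x in S, ∫ y in T, W x y))

/-- The envelope `⟨W⟩`: the set of graphons arising as weak* limits of versions of `W`. -/
def envelope (W : UI → UI → ℝ) : Set (UI → UI → ℝ) :=
  { U | IsGraphon U ∧ ∃ π : ℕ → MPB, WeakStarTendsto (fun n => vers W (π n).toFun) U }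

/-- The `L¹` distance on `[0,1]²`. -/
def L1dist (U V : UI → UI → ℝ) : ℝ :=
  ∫ x : UI, ∫ y : UI, |U x y - V x y|

/-- The homomorphism density of the `m`-cycle `C_m` in `W`. -/
def cycleDensity (m : ℕ) (W : UI → UI → ℝ) : ℝ :=
  ∫ x : Fin m → UI, ∏ i, W (x i) (x (finRotate m i))

/-- The homomorphism density `t(H,W)` of a finite simple graph `H` on `{0,…,n-1}` in `W`. -/
def homDensity {n : ℕ} (G : SimpleGraph (Fin n)) [DecidableRel G.Adj]
    (W : UI → UI → ℝ) : ℝ :=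
  ∫ x : Fin n → UI, ∏ p : Fin n × Fin n,
    if p.1 < p.2 ∧ G.Adj p.1 p.2 then W (x p.1) (x p.2) else 1

/-- The decorated homomorphism density `t(H,w)` where each edge `{i,j}` of `H` carries the
function `w i j`. -/
def homDensityDecorated {n : ℕ} (G : SimpleGraph (Fin n)) [DecidableRel G.Adj]
    (w : Fin n → Fin n → UI → UI → ℝ) : ℝ :=
  ∫ x : Fin n → UI, ∏ p : Fin n × Fin n,
    if p.1 < p.2 ∧ G.Adj p.1 p.2 then w p.1 p.2 (x p.1) (x p.2) else 1

/-- The number of edges `e(H)`. -/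
def edgeCount {n : ℕ} (G : SimpleGraph (Fin n)) [DecidableRel G.Adj] : ℕ :=
  G.edgeFinset.card

/-- The average of `W` over `A × B` (zero if `A` or `B` is a null set). -/
def stepAvg (W : UI → UI → ℝ) (A B : Set UI) : ℝ :=
  (∫ x in A, ∫ y in B, W x y) / ((volume A).toReal * (volume B).toReal)

/-- The stepping `W^{⋈P}` of `W` with respect to the finite partition of `[0,1]` given by the
fibers of the colouring `P : [0,1] → κ`. -/
def stepping {κ : Type*} (W : UI → UI → ℝ) (P : UI → κ) : UI → UI → ℝ :=
  fun x y => stepAvg W (P ⁻¹' {P x}) (P ⁻¹' {P y})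

/-- A finite measurable partition of `[0,1]`, presented as a colouring with finitely many
colours, all of whose fibers are measurable. -/
def IsFinitePartition {κ : Type*} (P : UI → κ) : Prop :=
  Finite κ ∧ ∀ c : κ, MeasurableSet (P ⁻¹' {c})

/-- A graphon parameter: a real-valued function on graphons invariant under cut distance `0`. -/
def GraphonParam (θ : (UI → UI → ℝ) → ℝ) : Prop :=
  ∀ U W, IsGraphon U → IsGraphon W → cutDist U W = 0 → θ U = θ W

/-- The structuredness order: `U ⪯ W` iff `⟨U⟩ ⊆ ⟨W⟩`. -/
def structLE (U W : UI → UI → ℝ) : Prop := envelope U ⊆ envelope W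

/-- The strict structuredness order: `U ≺ W`. -/
def structLT (U W : UI → UI → ℝ) : Prop :=
  envelope U ⊆ envelope W ∧ ¬ envelope W ⊆ envelope U

/-- A cut distance compatible graphon parameter. -/
def CutDistCompatible (θ : (UI → UI → ℝ) → ℝ) : Prop :=
  ∀ U W, IsGraphon U → IsGraphon W → structLE U W → θ U ≤ θ W

/-- A cut distance identifying graphon parameter. -/
def CutDistIdentifying (θ : (UI → UI → ℝ) → ℝ) : Prop :=
  ∀ U W, IsGraphon U → IsGraphon W → structLT U W → θ U < θ W

/-- `θ` is continuous with respect to the `L¹` norm on graphons. -/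
def L1Continuous (θ : (UI → UI → ℝ) → ℝ) : Prop :=
  ∀ W, IsGraphon W → ∀ ε : ℝ, 0 < ε → ∃ δ : ℝ, 0 < δ ∧
    ∀ U, IsGraphon U → L1dist U W < δ → |θ U - θ W| < ε

/-- `θ` is continuous with respect to the cut distance. -/
def CutDistContinuous (θ : (UI → UI → ℝ) → ℝ) : Prop :=
  ∀ (Wn : ℕ → UI → UI → ℝ) (W : UI → UI → ℝ), (∀ n, IsGraphon (Wn n)) → IsGraphon W →
    Filter.Tendsto (fun n => cutDist (Wn n) W) Filter.atTop (nhds 0) →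
    Filter.Tendsto (fun n => θ (Wn n)) Filter.atTop (nhds (θ W))

/-- `H` is seminorming: `W ↦ |t(H,W)|^{1/e(H)}` is a seminorm on the space of kernels. -/
def IsSeminorming {n : ℕ} (G : SimpleGraph (Fin n)) [DecidableRel G.Adj] : Prop :=
  0 < edgeCount G ∧
  (∀ W₁ W₂ : UI → UI → ℝ, IsKernel W₁ → IsKernel W₂ →
    |homDensity G (fun x y => W₁ x y + W₂ x y)| ^ ((edgeCount G : ℝ)⁻¹) ≤
      |homDensity G W₁| ^ ((edgeCount G : ℝ)⁻¹) + |homDensity G W₂| ^ ((edgeCount G : ℝ)⁻¹)) ∧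
  (∀ (c : ℝ) (W : UI → UI → ℝ), IsKernel W →
    |homDensity G (fun x y => c * W x y)| ^ ((edgeCount G : ℝ)⁻¹) =
      |c| * |homDensity G W| ^ ((edgeCount G : ℝ)⁻¹))


/-- A convex graphon parameter: `f(∑ αᵢ Wᵢ) ≤ ∑ αᵢ f(Wᵢ)` for convex combinations of
graphons. -/
def ConvexGraphonParam (f : (UI → UI → ℝ) → ℝ) : Prop :=
  ∀ (k : ℕ) (α : Fin k → ℝ), (∀ i, α i ∈ Set.Icc (0:ℝ) 1) → (∑ i, α i) = 1 →
    ∀ (W : UI → UI → ℝ) (Ws : Fin k → UI → UI → ℝ),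
      IsGraphon W → (∀ i, IsGraphon (Ws i)) →
      (W = fun x y => ∑ i, α i * Ws i x y) →
      f W ≤ ∑ i, α i * f (Ws i)

section AuxStatement14

open Filter

instance UI.instIsProbabilityMeasure : IsProbabilityMeasure (volume : Measure UI) where
  measure_univ := by
    rw [Measure.Subtype.volume_univ nullMeasurableSet_Icc, Real.volume_Icc, sub_zero,
      ENNReal.ofReal_one]

lemma integrable_of_bdd {F : UI × UI → ℝ} {C : ℝ} (hm : Measurable F)
    (hb : ∀ p, |F p| ≤ C) : Integrable F (volume : Measure (UI × UI)) :=
  ⟨hm.aestronglyMeasurable,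
    HasFiniteIntegral.of_bounded (C := C) (Filter.Eventually.of_forall fun p => by
      simpa [Real.norm_eq_abs] using hb p)⟩

lemma integrable_mul_of_bdd {F G : UI × UI → ℝ} {C1 C2 : ℝ}
    (hm1 : Measurable F) (hb1 : ∀ p, |F p| ≤ C1)
    (hm2 : Measurable G) (hb2 : ∀ p, |G p| ≤ C2) :
    Integrable (fun p => F p * G p) (volume : Measure (UI × UI)) :=
  integrable_of_bdd (hm1.mul hm2) (fun p => by
    rw [abs_mul]
    exact mul_le_mul (hb1 p) (hb2 p) (abs_nonneg _) (le_trans (abs_nonneg _) (hb1 p)))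

lemma measurable_uncurry_vers {W : UI → UI → ℝ} (hW : Measurable (Function.uncurry W))
    {φ : UI → UI} (hφ : Measurable φ) :
    Measurable (Function.uncurry (vers W φ)) := by
  have h : Function.uncurry (vers W φ)
      = (Function.uncurry W) ∘ fun p : UI × UI => (φ p.1, φ p.2) := rfl
  rw [h]
  exact hW.comp ((hφ.comp measurable_fst).prodMk (hφ.comp measurable_snd))

lemma isGraphon_vers {W : UI → UI → ℝ} (hW : IsGraphon W) (σ : MPB) :
    IsGraphon (vers W σ.toFun) :=
  ⟨measurable_uncurry_vers hW.1 σ.measurePreserving.measurable,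
   fun x y => hW.2.1 _ _, fun x y => hW.2.2 _ _⟩

lemma cutNorm_nonneg (V : UI → UI → ℝ) : 0 ≤ cutNorm V :=
  Real.sSup_nonneg (by rintro r ⟨S, T, hS, hT, rfl⟩; exact abs_nonneg _)

lemma cutNorm_sub_self (V : UI → UI → ℝ) : cutNorm (fun x y => V x y - V x y) = 0 := by
  have h : (fun x y : UI => V x y - V x y) = fun _ _ => (0:ℝ) := by funext x y; ring
  rw [h]
  have hset : { r : ℝ | ∃ S T : Set UI, MeasurableSet S ∧ MeasurableSet T ∧
      r = |∫ x in S, ∫ y in T, (fun _ _ : UI => (0:ℝ)) x y| } = {(0:ℝ)} := by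
    ext r
    simp only [integral_zero, abs_zero, Set.mem_setOf_eq, Set.mem_singleton_iff]
    constructor
    · rintro ⟨S, T, -, -, rfl⟩; rfl
    · rintro rfl; exact ⟨∅, ∅, MeasurableSet.empty, MeasurableSet.empty, rfl⟩
  rw [cutNorm, hset, csSup_singleton]

instance : Nonempty MPB := ⟨⟨id, Function.bijective_id, MeasurePreserving.id _⟩⟩

lemma cutDist_vers_self (W : UI → UI → ℝ) (σ : MPB) : cutDist (vers W σ.toFun) W = 0 := by
  refine le_antisymm ?_ (Real.iInf_nonneg fun φ => cutNorm_nonneg _)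
  have h := ciInf_le
    (f := fun φ : MPB => cutNorm fun x y => vers W σ.toFun x y - vers W φ.toFun x y)
    ⟨0, by rintro r ⟨φ, rfl⟩; exact cutNorm_nonneg _⟩ σ
  exact le_trans h (le_of_eq (cutNorm_sub_self _))

lemma setIntegral_rect {F : UI × UI → ℝ} (hF : Integrable F (volume : Measure (UI × UI)))
    (S T : Set UI) :
    ∫ p in S ×ˢ T, F p = ∫ x in S, ∫ y in T, F (x, y) := by
  exact setIntegral_prod F hF.integrableOn

end AuxStatement14

set_option maxHeartbeats 2000000

/-- Every convex graphon parameter that is continuous in the `L¹` norm is cut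
distance compatible. -/
theorem convex_L1cont_cutDistCompatible (f : (UI → UI → ℝ) → ℝ)
    (hparam : GraphonParam f) (hconv : ConvexGraphonParam f) (hcont : L1Continuous f) :
    CutDistCompatible f := by
  classical
  intro U W hU hW hle
  open Filter in
  -- `U` belongs to its own envelope, hence to the envelope of `W`.
  have hUU : U ∈ envelope U := by
    refine ⟨hU, fun _ => ⟨id, Function.bijective_id, MeasurePreserving.id _⟩, ?_⟩
    intro S T hS hT
    exact tendsto_const_nhds
  obtain ⟨-, π, hπ⟩ := hle hUU
  -- the difference functions
  set g : ℕ → UI × UI → ℝ :=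
    fun n p => W ((π n).toFun p.1) ((π n).toFun p.2) - U p.1 p.2 with hg
  have hgm : ∀ n, Measurable (g n) := by
    intro n
    have h1 : Measurable (Function.uncurry (vers W (π n).toFun)) :=
      measurable_uncurry_vers hW.1 (π n).measurePreserving.measurable
    have h2 : Measurable (Function.uncurry U) := hU.1
    exact h1.sub h2
  have hgb : ∀ n p, |g n p| ≤ 1 := by
    intro n p
    have h1 := hW.2.2 ((π n).toFun p.1) ((π n).toFun p.2)
    have h2 := hU.2.2 p.1 p.2
    simp only [Set.mem_Icc] at h1 h2
    rw [hg, abs_le]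
    constructor <;> simp only <;> linarith [h1.1, h1.2, h2.1, h2.2]
  have hgint : ∀ n, Integrable (g n) (volume : Measure (UI × UI)) :=
    fun n => integrable_of_bdd (hgm n) (hgb n)
  -- Step A: rectangles
  have hrect : ∀ S T : Set UI, MeasurableSet S → MeasurableSet T →
      Tendsto (fun n => ∫ p in S ×ˢ T, g n p) atTop (nhds 0) := by
    intro S T hS hT
    have hA : ∀ n, Integrable (fun p : UI × UI => W ((π n).toFun p.1) ((π n).toFun p.2))
        (volume : Measure (UI × UI)) := by
      intro n
      refine integrable_of_bdd (C := 1) (measurable_uncurry_vers hW.1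
        (π n).measurePreserving.measurable) (fun p => ?_)
      have h1 := hW.2.2 ((π n).toFun p.1) ((π n).toFun p.2)
      simp only [Set.mem_Icc] at h1
      rw [abs_le]; exact ⟨by linarith [h1.1], h1.2⟩
    have hB : Integrable (fun p : UI × UI => U p.1 p.2) (volume : Measure (UI × UI)) := by
      refine integrable_of_bdd (C := 1) hU.1 (fun p => ?_)
      have h2 := hU.2.2 p.1 p.2
      simp only [Set.mem_Icc] at h2
      rw [abs_le]; exact ⟨by linarith [h2.1], h2.2⟩
    have key : ∀ n, ∫ p in S ×ˢ T, g n p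
        = (∫ x in S, ∫ y in T, vers W (π n).toFun x y) - ∫ x in S, ∫ y in T, U x y := by
      intro n
      simp only [hg]
      rw [integral_sub (hA n).integrableOn hB.integrableOn]
      rw [setIntegral_rect (hA n) S T, setIntegral_rect hB S T]
      rfl
    have hconst : Tendsto (fun _ : ℕ => ∫ x in S, ∫ y in T, U x y) atTop
        (nhds (∫ x in S, ∫ y in T, U x y)) := tendsto_const_nhds
    have h0 := (hπ S T hS hT).sub hconst
    rw [sub_self] at h0
    have heq : (fun n => ∫ p in S ×ˢ T, g n p)
        = fun n => (∫ x in S, ∫ y in T, vers W (π n).toFun x y) - ∫ x in S, ∫ y in T, U x y :=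
      funext key
    rw [heq]
    exact h0
  have huniv : Tendsto (fun n => ∫ p, g n p) atTop (nhds 0) := by
    have h := hrect Set.univ Set.univ MeasurableSet.univ MeasurableSet.univ
    simpa [Set.univ_prod_univ, Measure.restrict_univ] using h
  -- Step A: all measurable sets
  have hsetT : ∀ s : Set (UI × UI), MeasurableSet s →
      Tendsto (fun n => ∫ p in s, g n p) atTop (nhds 0) := by
    intro s hs
    refine MeasurableSpace.induction_on_inter
      (C := fun t _ => Tendsto (fun n => ∫ p in t, g n p) atTop (nhds 0))
      generateFrom_prod.symm isPiSystem_prod ?_ ?_ ?_ ?_ s hs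
    · simp only [Measure.restrict_empty, integral_zero_measure]
      exact tendsto_const_nhds
    · rintro t ⟨S, hS, T, hT, rfl⟩
      exact hrect S T hS hT
    · intro t ht hCt
      have hteq : ∀ n, ∫ p in tᶜ, g n p = (∫ p, g n p) - ∫ p in t, g n p := by
        intro n
        rw [← integral_add_compl ht (hgint n)]
        ring
      have h := huniv.sub hCt
      rw [sub_zero] at h
      simpa only [hteq] using h
    · intro F hdisj hmF hCF
      have key : ∀ n, ∫ p in ⋃ i, F i, g n p = ∑' i, ∫ p in F i, g n p :=
        fun n => integral_iUnion hmF hdisj (hgint n).integrableOn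
      have hsum : Summable (fun i => ((volume : Measure (UI × UI)) (F i)).toReal) := by
        refine ENNReal.summable_toReal ?_
        rw [← measure_iUnion hdisj hmF]
        exact measure_ne_top _ _
      have h := tendsto_tsum_of_dominated_convergence
        (f := fun n i => ∫ p in F i, g n p) (g := fun _ => (0:ℝ))
        (bound := fun i => ((volume : Measure (UI × UI)) (F i)).toReal)
        hsum hCF (Filter.Eventually.of_forall (fun n i => by
          have hb := norm_setIntegral_le_of_norm_le_const (C := 1)
            (μ := (volume : Measure (UI × UI))) (s := F i) (f := g n)
            (measure_lt_top _ _)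
            (fun p _ => by simpa [Real.norm_eq_abs] using hgb n p)
          simpa [Measure.real] using hb))
      rw [tsum_zero] at h
      simpa only [key] using h
  -- Step B: integration against bounded measurable functions
  have hmul : ∀ (h : UI × UI → ℝ) (C : ℝ), Measurable h → (∀ p, |h p| ≤ C) →
      Tendsto (fun n => ∫ p, g n p * h p) atTop (nhds 0) := by
    have hsimple : ∀ φ : MeasureTheory.SimpleFunc (UI × UI) ℝ,
        Tendsto (fun n => ∫ p, g n p * φ p) atTop (nhds 0) := by
      intro φ
      induction φ using MeasureTheory.SimpleFunc.induction with
      | const c hs =>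
        rename_i s
        have hthis : ∀ n, ∫ p, g n p *
            (MeasureTheory.SimpleFunc.piecewise s hs
              (MeasureTheory.SimpleFunc.const _ c)
              (MeasureTheory.SimpleFunc.const _ 0)) p = c * ∫ p in s, g n p := by
          intro n
          have hpt : (fun p => g n p *
              (MeasureTheory.SimpleFunc.piecewise s hs
                (MeasureTheory.SimpleFunc.const _ c)
                (MeasureTheory.SimpleFunc.const _ 0)) p)
              = Set.indicator s (fun q => c * g n q) := by
            funext p
            by_cases hp : p ∈ s <;>
              simp [MeasureTheory.SimpleFunc.piecewise_apply, hp, Set.indicator_of_mem,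
                Set.indicator_of_notMem, mul_comm]
          rw [hpt, integral_indicator hs, integral_const_mul]
        simp only [hthis]
        have h := (hsetT s hs).const_mul c
        simpa using h
      | add hdis h1 h2 =>
        rename_i φ₁ φ₂
        obtain ⟨C1, hC1⟩ := φ₁.exists_forall_norm_le
        obtain ⟨C2, hC2⟩ := φ₂.exists_forall_norm_le
        have hint1 : ∀ n, Integrable (fun p => g n p * φ₁ p) (volume : Measure (UI × UI)) :=
          fun n => integrable_mul_of_bdd (hgm n) (hgb n) φ₁.measurable
            (fun p => by simpa [Real.norm_eq_abs] using hC1 p)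
        have hint2 : ∀ n, Integrable (fun p => g n p * φ₂ p) (volume : Measure (UI × UI)) :=
          fun n => integrable_mul_of_bdd (hgm n) (hgb n) φ₂.measurable
            (fun p => by simpa [Real.norm_eq_abs] using hC2 p)
        have hthis : ∀ n, ∫ p, g n p * (φ₁ + φ₂) p
            = (∫ p, g n p * φ₁ p) + ∫ p, g n p * φ₂ p := by
          intro n
          rw [← integral_add (hint1 n) (hint2 n)]
          refine integral_congr_ae (Filter.Eventually.of_forall fun p => ?_)
          simp [mul_add]
        simp only [hthis]
        have h := h1.add h2
        simpa using h
    intro h C hm hb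
    rw [NormedAddCommGroup.tendsto_nhds_zero]
    intro ε hε
    have hmem : MemLp h 1 (volume : Measure (UI × UI)) :=
      memLp_one_iff_integrable.mpr (integrable_of_bdd hm hb)
    obtain ⟨φ, hφ, -⟩ := hmem.exists_simpleFunc_eLpNorm_sub_lt ENNReal.one_ne_top
      (ε := ENNReal.ofReal (ε/2)) (ENNReal.ofReal_pos.mpr (by positivity)).ne'
    obtain ⟨Cφ, hCφ⟩ := φ.exists_forall_norm_le
    have hCφ' : ∀ p, |(φ : UI × UI → ℝ) p| ≤ Cφ := fun p => by
      simpa [Real.norm_eq_abs] using hCφ p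
    have hbd' : ∀ p, |h p - φ p| ≤ C + Cφ := by
      intro p
      calc |h p - φ p| ≤ |h p| + |φ p| := abs_sub _ _
        _ ≤ C + Cφ := add_le_add (hb p) (hCφ' p)
    have hsubm : Measurable (fun p => h p - (φ : UI × UI → ℝ) p) := hm.sub φ.measurable
    have hsubint : Integrable (fun p => h p - (φ : UI × UI → ℝ) p)
        (volume : Measure (UI × UI)) := integrable_of_bdd hsubm hbd'
    have hint1 : ∀ n, Integrable (fun p => g n p * (h p - φ p))
        (volume : Measure (UI × UI)) :=
      fun n => integrable_mul_of_bdd (hgm n) (hgb n) hsubm hbd'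
    have hint2 : ∀ n, Integrable (fun p => g n p * φ p) (volume : Measure (UI × UI)) :=
      fun n => integrable_mul_of_bdd (hgm n) (hgb n) φ.measurable hCφ'
    have hL1 : ∫ p, |h p - φ p| < ε/2 := by
      have h1 : ∫ p, |h p - φ p| = (eLpNorm (h - (φ : UI × UI → ℝ)) 1
          (volume : Measure (UI × UI))).toReal := by
        rw [eLpNorm_one_eq_lintegral_enorm]
        have h2 := integral_norm_eq_lintegral_enorm
          (f := h - (φ : UI × UI → ℝ)) (μ := (volume : Measure (UI × UI)))
          hsubm.aestronglyMeasurable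
        simpa [Real.norm_eq_abs] using h2
      rw [h1]
      have hne : eLpNorm (h - (φ : UI × UI → ℝ)) 1 (volume : Measure (UI × UI)) ≠ ⊤ :=
        (lt_of_lt_of_le hφ le_top).ne
      have h3 := (ENNReal.toReal_lt_toReal hne ENNReal.ofReal_ne_top).mpr hφ
      rwa [ENNReal.toReal_ofReal (by positivity)] at h3
    have hev1 : ∀ n, ‖∫ p, g n p * (h p - φ p)‖ < ε/2 := by
      intro n
      calc ‖∫ p, g n p * (h p - φ p)‖ ≤ ∫ p, ‖g n p * (h p - φ p)‖ :=
            norm_integral_le_integral_norm _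
        _ ≤ ∫ p, |h p - φ p| := by
            refine integral_mono (hint1 n).norm hsubint.abs (fun p => ?_)
            rw [Real.norm_eq_abs, abs_mul]
            exact mul_le_of_le_one_left (abs_nonneg _) (hgb n p)
        _ < ε/2 := hL1
    have hev2 := (NormedAddCommGroup.tendsto_nhds_zero.mp (hsimple φ)) (ε/2) (by positivity)
    filter_upwards [hev2] with n hn
    calc ‖∫ p, g n p * h p‖
        = ‖(∫ p, g n p * (h p - φ p)) + ∫ p, g n p * φ p‖ := by
          rw [← integral_add (hint1 n) (hint2 n)]
          refine congrArg _ (integral_congr_ae (Filter.Eventually.of_forall fun p => ?_))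
          ring
      _ ≤ ‖∫ p, g n p * (h p - φ p)‖ + ‖∫ p, g n p * φ p‖ := norm_add_le _ _
      _ < ε/2 + ε/2 := add_lt_add (hev1 n) hn
      _ = ε := by ring
  -- Step C: near-orthogonal selections
  have hsel : ∀ ε' : ℝ, 0 < ε' → ∀ m : ℕ, ∃ s : Fin m → ℕ,
      ∀ j k : Fin m, (j:ℕ) < (k:ℕ) → |∫ p, g (s j) p * g (s k) p| ≤ ε' := by
    intro ε' hε' m
    induction m with
    | zero => exact ⟨Fin.elim0, fun j => j.elim0⟩
    | succ m ih =>
      obtain ⟨s, hs⟩ := ih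
      have hev : ∀ᶠ N in atTop, ∀ j : Fin m, |∫ p, g (s j) p * g N p| ≤ ε' := by
        rw [eventually_all]
        intro j
        have h := hmul (g (s j)) 1 (hgm _) (hgb _)
        have h2 : Tendsto (fun n => ∫ p, g (s j) p * g n p) atTop (nhds 0) := by
          have heq : (fun n => ∫ p, g (s j) p * g n p)
              = fun n => ∫ p, g n p * g (s j) p := by
            funext n
            exact integral_congr_ae (Filter.Eventually.of_forall fun p => mul_comm _ _)
          rw [heq]
          exact h
        have h3 := (NormedAddCommGroup.tendsto_nhds_zero.mp h2) ε' hε'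
        filter_upwards [h3] with N hN
        exact le_of_lt (by simpa [Real.norm_eq_abs] using hN)
      obtain ⟨N, hN⟩ := hev.exists
      refine ⟨fun i => if hi : (i:ℕ) < m then s ⟨i, hi⟩ else N, ?_⟩
      intro j k hjk
      by_cases hk : (k:ℕ) < m
      · have hj : (j:ℕ) < m := lt_trans hjk hk
        simp only [dif_pos hj, dif_pos hk]
        exact hs ⟨j, hj⟩ ⟨k, hk⟩ hjk
      · have hj : (j:ℕ) < m := by have := k.isLt; omega
        simp only [dif_pos hj, dif_neg hk]
        exact hN ⟨j, hj⟩
  -- Step D: assembly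
  by_contra hcon
  push_neg at hcon
  have hεpos : 0 < f U - f W := sub_pos.mpr hcon
  obtain ⟨δ, hδpos, hδ⟩ := hcont U hU (f U - f W) hεpos
  obtain ⟨m, hm⟩ := exists_nat_gt (max 1 (8 / δ^2))
  have hm1R : (1:ℝ) < m := lt_of_le_of_lt (le_max_left _ _) hm
  have hmpos : (0:ℝ) < m := lt_trans one_pos hm1R
  have hm0 : (m:ℝ) ≠ 0 := ne_of_gt hmpos
  have hminv : (m:ℝ)⁻¹ ≤ δ^2/8 := by
    have h8m : 8 / δ^2 ≤ (m:ℝ) := le_of_lt (lt_of_le_of_lt (le_max_right _ _) hm)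
    calc (m:ℝ)⁻¹ ≤ (8/δ^2)⁻¹ := inv_anti₀ (by positivity) h8m
      _ = δ^2/8 := by rw [inv_div]
  obtain ⟨s, hs⟩ := hsel (δ^2/8) (by positivity) m
  set Ws : Fin m → UI → UI → ℝ := fun i => vers W (π (s i)).toFun with hWs
  set V : UI → UI → ℝ := fun x y => ∑ i, (m:ℝ)⁻¹ * Ws i x y with hV
  have hWsG : ∀ i, IsGraphon (Ws i) := fun i => isGraphon_vers hW _
  have hWsb : ∀ i x y, Ws i x y ∈ Set.Icc (0:ℝ) 1 := fun i x y => (hWsG i).2.2 x y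
  have hVG : IsGraphon V := by
    refine ⟨?_, ?_, ?_⟩
    · have heq : Function.uncurry V
          = fun p : UI × UI => ∑ i : Fin m, (m:ℝ)⁻¹ * Function.uncurry (Ws i) p := by
        funext p
        simp only [hV, Function.uncurry]
      rw [heq]
      exact Finset.measurable_sum _ (fun i _ => ((hWsG i).1.const_mul _))
    · intro x y
      simp only [hV]
      exact Finset.sum_congr rfl fun i _ => by rw [(hWsG i).2.1 x y]
    · intro x y
      simp only [hV]
      constructor
      · refine Finset.sum_nonneg fun i _ => ?_
        have := (hWsb i x y).1
        positivity
      · calc ∑ i : Fin m, (m:ℝ)⁻¹ * Ws i x y ≤ ∑ _i : Fin m, (m:ℝ)⁻¹ := by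
              refine Finset.sum_le_sum fun i _ => ?_
              have h1 := (hWsb i x y).2
              have h2 : (0:ℝ) ≤ (m:ℝ)⁻¹ := by positivity
              nlinarith
          _ = 1 := by
              rw [Finset.sum_const, Finset.card_univ, Fintype.card_fin, nsmul_eq_mul,
                mul_inv_cancel₀ hm0]
  have hinv1 : (m:ℝ)⁻¹ ≤ 1 := by
    calc (m:ℝ)⁻¹ ≤ (1:ℝ)⁻¹ := inv_anti₀ one_pos (le_of_lt hm1R)
      _ = 1 := inv_one
  have hsum1 : ∑ _i : Fin m, (m:ℝ)⁻¹ = 1 := by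
    rw [Finset.sum_const, Finset.card_univ, Fintype.card_fin, nsmul_eq_mul,
      mul_inv_cancel₀ hm0]
  have hfV : f V ≤ f W := by
    have h1 := hconv m (fun _ => (m:ℝ)⁻¹)
      (fun i => ⟨by positivity, hinv1⟩) hsum1 V Ws hVG hWsG hV
    calc f V ≤ ∑ i : Fin m, (m:ℝ)⁻¹ * f (Ws i) := h1
      _ = ∑ _i : Fin m, (m:ℝ)⁻¹ * f W := by
          refine Finset.sum_congr rfl fun i _ => ?_
          have h2 : f (Ws i) = f W := by
            refine hparam (Ws i) W (hWsG i) hW ?_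
            simp only [hWs]
            exact cutDist_vers_self W (π (s i))
          rw [h2]
      _ = f W := by
          rw [← Finset.sum_mul, hsum1, one_mul]
  -- the L¹ estimate
  have hVm : Measurable (fun p : UI × UI => V p.1 p.2) := hVG.1
  have hUm : Measurable (fun p : UI × UI => U p.1 p.2) := hU.1
  have hDm : Measurable (fun p : UI × UI => V p.1 p.2 - U p.1 p.2) := hVm.sub hUm
  have hDb : ∀ p : UI × UI, |V p.1 p.2 - U p.1 p.2| ≤ 1 := by
    intro p
    have h1 := hVG.2.2 p.1 p.2
    have h2 := hU.2.2 p.1 p.2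
    simp only [Set.mem_Icc] at h1 h2
    rw [abs_le]
    constructor <;> linarith [h1.1, h1.2, h2.1, h2.2]
  have hDint : Integrable (fun p : UI × UI => V p.1 p.2 - U p.1 p.2)
      (volume : Measure (UI × UI)) := integrable_of_bdd hDm hDb
  have hkey : ∀ p : UI × UI, V p.1 p.2 - U p.1 p.2 = (m:ℝ)⁻¹ * ∑ i, g (s i) p := by
    intro p
    simp only [hV, hg, hWs, vers]
    rw [Finset.mul_sum]
    have h1 : ∑ i : Fin m, (m:ℝ)⁻¹ * (W ((π (s i)).toFun p.1) ((π (s i)).toFun p.2) - U p.1 p.2)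
        = (∑ i : Fin m, (m:ℝ)⁻¹ * W ((π (s i)).toFun p.1) ((π (s i)).toFun p.2))
          - ∑ _i : Fin m, (m:ℝ)⁻¹ * U p.1 p.2 := by
      rw [← Finset.sum_sub_distrib]
      exact Finset.sum_congr rfl fun i _ => by ring
    rw [h1, Finset.sum_const, Finset.card_univ, Fintype.card_fin, nsmul_eq_mul]
    have h2 : (m:ℝ) * ((m:ℝ)⁻¹ * U p.1 p.2) = U p.1 p.2 := by field_simp
    rw [h2]
  have hinteach : ∀ i j : Fin m, Integrable (fun p => g (s i) p * g (s j) p)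
      (volume : Measure (UI × UI)) :=
    fun i j => integrable_mul_of_bdd (hgm _) (hgb _) (hgm _) (hgb _)
  have hsq_int : Integrable (fun p : UI × UI => (V p.1 p.2 - U p.1 p.2)^2)
      (volume : Measure (UI × UI)) := by
    refine integrable_of_bdd (C := 1) (hDm.pow_const 2) (fun p => ?_)
    rw [abs_le]
    have h1 := hDb p
    rw [abs_le] at h1
    constructor <;> nlinarith [h1.1, h1.2]
  have hI2 : ∫ p : UI × UI, (V p.1 p.2 - U p.1 p.2)^2 ≤ (m:ℝ)⁻¹ + δ^2/8 := by
    have expand : ∀ p : UI × UI, (V p.1 p.2 - U p.1 p.2)^2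
        = ((m:ℝ)⁻¹)^2 * ∑ i : Fin m, ∑ j : Fin m, g (s i) p * g (s j) p := by
      intro p
      rw [hkey p, mul_pow]
      congr 1
      rw [sq, Finset.sum_mul_sum]
    calc ∫ p : UI × UI, (V p.1 p.2 - U p.1 p.2)^2
        = ((m:ℝ)⁻¹)^2 * ∑ i : Fin m, ∑ j : Fin m, ∫ p, g (s i) p * g (s j) p := by
          simp only [expand]
          rw [integral_const_mul]
          congr 1
          rw [integral_finset_sum _ (fun i _ => integrable_finset_sum _
            (fun j _ => hinteach i j))]
          exact Finset.sum_congr rfl fun i _ =>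
            integral_finset_sum _ fun j _ => hinteach i j
      _ ≤ ((m:ℝ)⁻¹)^2 * ∑ i : Fin m, ∑ j : Fin m,
            ((if i = j then (1:ℝ) else 0) + δ^2/8) := by
          refine mul_le_mul_of_nonneg_left ?_ (by positivity)
          refine Finset.sum_le_sum fun i _ => Finset.sum_le_sum fun j _ => ?_
          by_cases hij : i = j
          · subst hij
            rw [if_pos rfl]
            have hle1 : ∫ p, g (s i) p * g (s i) p ≤ 1 := by
              calc ∫ p, g (s i) p * g (s i) p ≤ ∫ _p : UI × UI, (1:ℝ) := by
                    refine integral_mono (hinteach i i) (integrable_const 1) (fun p => ?_)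
                    calc g (s i) p * g (s i) p ≤ |g (s i) p * g (s i) p| := le_abs_self _
                      _ = |g (s i) p| * |g (s i) p| := abs_mul _ _
                      _ ≤ 1 := mul_le_one₀ (hgb _ p) (abs_nonneg _) (hgb _ p)
                _ = 1 := by simp [measure_univ]
            have : (0:ℝ) ≤ δ^2/8 := by positivity
            linarith
          · rw [if_neg hij]
            have hvne : (i:ℕ) ≠ (j:ℕ) := fun h => hij (Fin.ext h)
            have habs : |∫ p, g (s i) p * g (s j) p| ≤ δ^2/8 := by
              rcases lt_or_gt_of_ne hvne with hlt | hgt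
              · exact hs i j hlt
              · have hsw : ∫ p, g (s i) p * g (s j) p = ∫ p, g (s j) p * g (s i) p :=
                  integral_congr_ae (Filter.Eventually.of_forall fun p => mul_comm _ _)
                rw [hsw]
                exact hs j i hgt
            rw [zero_add]
            exact le_trans (le_abs_self _) habs
      _ = ((m:ℝ)⁻¹)^2 * ((m:ℝ) + (m:ℝ)^2 * (δ^2/8)) := by
          congr 1
          have hrow : ∀ i : Fin m, ∑ j : Fin m, ((if i = j then (1:ℝ) else 0) + δ^2/8)
              = 1 + (m:ℝ) * (δ^2/8) := by
            intro i
            rw [Finset.sum_add_distrib, Finset.sum_const, Finset.card_univ,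
              Fintype.card_fin, Finset.sum_ite_eq, if_pos (Finset.mem_univ i), nsmul_eq_mul]
          rw [Finset.sum_congr rfl (fun i _ => hrow i), Finset.sum_const,
            Finset.card_univ, Fintype.card_fin, nsmul_eq_mul]
          ring
      _ ≤ (m:ℝ)⁻¹ + δ^2/8 := by
          rw [mul_add]
          have h1 : ((m:ℝ)⁻¹)^2 * (m:ℝ) = (m:ℝ)⁻¹ := by
            field_simp
          have h2 : ((m:ℝ)⁻¹)^2 * ((m:ℝ)^2 * (δ^2/8)) = δ^2/8 := by
            field_simp
          rw [h1, h2]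
  have hL1 : L1dist V U < δ := by
    have hiter : L1dist V U = ∫ p : UI × UI, |V p.1 p.2 - U p.1 p.2| := by
      rw [L1dist]
      exact (integral_prod (fun p : UI × UI => |V p.1 p.2 - U p.1 p.2|) hDint.abs).symm
    have hptbd : ∀ p : UI × UI, |V p.1 p.2 - U p.1 p.2|
        ≤ δ/4 + (V p.1 p.2 - U p.1 p.2)^2 * δ⁻¹ := by
      intro p
      have hkey2 : δ * |V p.1 p.2 - U p.1 p.2| ≤ δ^2/4 + (V p.1 p.2 - U p.1 p.2)^2 := by
        nlinarith [sq_nonneg (δ/2 - |V p.1 p.2 - U p.1 p.2|), sq_abs (V p.1 p.2 - U p.1 p.2)]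
      rw [← mul_le_mul_iff_right₀ hδpos]
      calc δ * |V p.1 p.2 - U p.1 p.2| ≤ δ^2/4 + (V p.1 p.2 - U p.1 p.2)^2 := hkey2
        _ = δ * (δ/4 + (V p.1 p.2 - U p.1 p.2)^2 * δ⁻¹) := by
            field_simp
    calc L1dist V U = ∫ p : UI × UI, |V p.1 p.2 - U p.1 p.2| := hiter
      _ ≤ ∫ p : UI × UI, (δ/4 + (V p.1 p.2 - U p.1 p.2)^2 * δ⁻¹) := by
          refine integral_mono hDint.abs ?_ hptbd
          exact (integrable_const _).add (hsq_int.mul_const _)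
      _ = δ/4 + (∫ p : UI × UI, (V p.1 p.2 - U p.1 p.2)^2) * δ⁻¹ := by
          rw [integral_add (integrable_const _) (hsq_int.mul_const _),
            integral_mul_const]
          simp [measure_univ]
      _ ≤ δ/4 + ((m:ℝ)⁻¹ + δ^2/8) * δ⁻¹ := by
          have hd : (0:ℝ) ≤ δ⁻¹ := by positivity
          have := mul_le_mul_of_nonneg_right hI2 hd
          linarith
      _ ≤ δ/4 + (δ^2/8 + δ^2/8) * δ⁻¹ := by
          have hd : (0:ℝ) ≤ δ⁻¹ := by positivity
          have h1 : ((m:ℝ)⁻¹ + δ^2/8) * δ⁻¹ ≤ (δ^2/8 + δ^2/8) * δ⁻¹ := by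
            refine mul_le_mul_of_nonneg_right ?_ hd
            linarith [hminv]
          linarith
      _ = δ/2 := by
          have hδne : δ ≠ 0 := ne_of_gt hδpos
          have h3 : (δ^2/8 + δ^2/8) * δ⁻¹ = δ/4 := by
            field_simp
            ring
          rw [h3]
          ring
      _ < δ := by linarith
  have hclose := hδ V hVG hL1
  rw [abs_lt] at hclose
  linarith [hclose.1, hfV]

end
end

section
/- For a graphon W and an integer k ≥ 1, define λ_k⁺(W) := sup over k-dimensional linear subspaces H of L²([0,1]) of inf over g ∈ H with ‖g‖₂ = 1 of ∫_{[0,1]²} W(x,y) g(x) g(y) dx dy, and λ_k⁻(W) := inf over k-dimensional linear subspaces H of L²([0,1]) of sup over g ∈ H with ‖g‖₂ = 1 of ∫_{[0,1]²} W(x,y) g(x) g(y) dx dy. If U and W are graphons with U ⪯ W, then for every k ≥ 1 one has λ_k⁺(U) ≤ λ_k⁺(W) and λ_k⁻(U) ≥ λ_k⁻(W). -/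
open MeasureTheory

attribute [local instance] Classical.propDecidable

noncomputable section

/-- The quadratic form `⟨T_W g, g⟩ = ∫∫ W(x,y) g(x) g(y)` associated to `W`. -/
def quadForm (W : UI → UI → ℝ) (g : Lp ℝ 2 (volume : Measure UI)) : ℝ :=
  ∫ x : UI, ∫ y : UI, W x y * g x * g y

/-- `λ_k⁺(W)`: supremum over `k`-dimensional subspaces `H` of `L²([0,1])` of the infimum of
the quadratic form over unit vectors of `H`. -/
def lamPlus (W : UI → UI → ℝ) (k : ℕ) : ℝ :=
  ⨆ H : {H : Submodule ℝ (Lp ℝ 2 (volume : Measure UI)) // Module.finrank ℝ H = k},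
    ⨅ g : {g : Lp ℝ 2 (volume : Measure UI) // g ∈ H.1 ∧ ‖g‖ = 1}, quadForm W g.1

/-- `λ_k⁻(W)`: infimum over `k`-dimensional subspaces `H` of `L²([0,1])` of the supremum of
the quadratic form over unit vectors of `H`. -/
def lamMinus (W : UI → UI → ℝ) (k : ℕ) : ℝ :=
  ⨅ H : {H : Submodule ℝ (Lp ℝ 2 (volume : Measure UI)) // Module.finrank ℝ H = k},
    ⨆ g : {g : Lp ℝ 2 (volume : Measure UI) // g ∈ H.1 ∧ ‖g‖ = 1}, quadForm W g.1

namespace SpectraAux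

open Function Filter

abbrev μUI : Measure UI := volume

lemma integrable_of_bdd {f : UI → ℝ} (hm : AEStronglyMeasurable f μUI) {C : ℝ}
    (h : ∀ x, |f x| ≤ C) : Integrable f μUI :=
  Integrable.mono' (integrable_const C) hm
    (Filter.Eventually.of_forall fun x => by simpa [Real.norm_eq_abs] using h x)

/-- The bilinear form as an integral over the product space. -/
def BB (V : UI → UI → ℝ) (f g : UI → ℝ) : ℝ :=
  ∫ z, V z.1 z.2 * f z.1 * g z.2 ∂(μUI.prod μUI)

lemma integrable_BB {V : UI → UI → ℝ} (hVm : Measurable (uncurry V))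
    (hVb : ∀ x y, |V x y| ≤ 1)
    {f g : UI → ℝ} (hf : Integrable f μUI) (hg : Integrable g μUI) :
    Integrable (fun z : UI × UI => V z.1 z.2 * f z.1 * g z.2) (μUI.prod μUI) := by
  have hVm' : Measurable fun z : UI × UI => V z.1 z.2 := hVm
  have h1 : AEStronglyMeasurable (fun z : UI × UI => f z.1) (μUI.prod μUI) :=
    hf.aestronglyMeasurable.comp_quasiMeasurePreserving Measure.quasiMeasurePreserving_fst
  have h2 : AEStronglyMeasurable (fun z : UI × UI => g z.2) (μUI.prod μUI) :=
    hg.aestronglyMeasurable.comp_quasiMeasurePreserving Measure.quasiMeasurePreserving_snd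
  have hdom : Integrable (fun z : UI × UI => |f z.1| * |g z.2|) (μUI.prod μUI) :=
    hf.abs.mul_prod hg.abs
  refine hdom.mono' ((hVm'.aestronglyMeasurable.mul h1).mul h2)
    (Filter.Eventually.of_forall fun z => ?_)
  rw [Real.norm_eq_abs, abs_mul, abs_mul]
  have h3 := hVb z.1 z.2
  have h4 := abs_nonneg (f z.1)
  have h5 := abs_nonneg (g z.2)
  have h6 := abs_nonneg (V z.1 z.2)
  nlinarith [mul_nonneg (sub_nonneg.mpr h3) (mul_nonneg h4 h5)]

lemma BB_le {V : UI → UI → ℝ} (hVm : Measurable (uncurry V)) (hVb : ∀ x y, |V x y| ≤ 1)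
    {f g : UI → ℝ} (hf : Integrable f μUI) (hg : Integrable g μUI) :
    |BB V f g| ≤ (∫ x, |f x| ∂μUI) * (∫ x, |g x| ∂μUI) := by
  have h := integrable_BB hVm hVb hf hg
  unfold BB
  rw [← Real.norm_eq_abs]
  calc ‖∫ z, V z.1 z.2 * f z.1 * g z.2 ∂(μUI.prod μUI)‖
      ≤ ∫ z, ‖V z.1 z.2 * f z.1 * g z.2‖ ∂(μUI.prod μUI) :=
        norm_integral_le_integral_norm _
    _ ≤ ∫ z, |f z.1| * |g z.2| ∂(μUI.prod μUI) := by
        refine integral_mono h.norm (hf.abs.mul_prod hg.abs) fun z => ?_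
        rw [Real.norm_eq_abs, abs_mul, abs_mul]
        have h3 := hVb z.1 z.2
        have h4 := abs_nonneg (f z.1)
        have h5 := abs_nonneg (g z.2)
        have h6 := abs_nonneg (V z.1 z.2)
        nlinarith [mul_nonneg (sub_nonneg.mpr h3) (mul_nonneg h4 h5)]
    _ = _ := integral_prod_mul (fun x => |f x|) (fun x => |g x|)

lemma BB_congr {V : UI → UI → ℝ} {f f' g g' : UI → ℝ} (hf : f =ᵐ[μUI] f')
    (hg : g =ᵐ[μUI] g') : BB V f g = BB V f' g' := by
  refine integral_congr_ae ?_
  have h1 : (fun z : UI × UI => f z.1) =ᵐ[μUI.prod μUI] fun z => f' z.1 :=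
    Measure.quasiMeasurePreserving_fst.ae_eq_comp hf
  have h2 : (fun z : UI × UI => g z.2) =ᵐ[μUI.prod μUI] fun z => g' z.2 :=
    Measure.quasiMeasurePreserving_snd.ae_eq_comp hg
  filter_upwards [h1, h2] with z e1 e2
  rw [e1, e2]

lemma BB_diff {V : UI → UI → ℝ} (hVm : Measurable (uncurry V)) (hVb : ∀ x y, |V x y| ≤ 1)
    {f s : UI → ℝ} (hf : Integrable f μUI) (hs : Integrable s μUI) :
    |BB V f f - BB V s s| ≤
      (∫ x, |f x - s x| ∂μUI) * ((∫ x, |f x| ∂μUI) + (∫ x, |s x| ∂μUI)) := by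
  have hfs : Integrable (f - s) μUI := hf.sub hs
  have key : BB V f f - BB V s s = BB V (f - s) f + BB V s (f - s) := by
    unfold BB
    rw [← integral_sub (integrable_BB hVm hVb hf hf) (integrable_BB hVm hVb hs hs),
        ← integral_add (integrable_BB hVm hVb hfs hf) (integrable_BB hVm hVb hs hfs)]
    congr 1; funext z
    simp only [Pi.sub_apply]; ring
  rw [key]
  have b1 := BB_le hVm hVb hfs hf
  have b2 := BB_le hVm hVb hs hfs
  have habs := abs_add_le (BB V (f - s) f) (BB V s (f - s))
  have e1 : (∫ x, |(f - s) x| ∂μUI) = ∫ x, |f x - s x| ∂μUI := rfl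
  rw [e1] at b1 b2
  have hnn : 0 ≤ ∫ x, |f x - s x| ∂μUI := integral_nonneg fun x => abs_nonneg _
  nlinarith [abs_le.mp b1, abs_le.mp b2]

lemma quadForm_eq_BB {V : UI → UI → ℝ} (hVm : Measurable (uncurry V))
    (hVb : ∀ x y, |V x y| ≤ 1) (g : Lp ℝ 2 μUI) :
    quadForm V g = BB V (⇑g) (⇑g) := by
  have hg : Integrable (⇑g) μUI := (Lp.memLp g).integrable one_le_two
  exact integral_integral (integrable_BB hVm hVb hg hg)

lemma int_abs_le_norm (g : Lp ℝ 2 μUI) : ∫ x, |g x| ∂μUI ≤ ‖g‖ := by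
  have hm := Lp.aestronglyMeasurable g
  have h12 : eLpNorm (⇑g) 1 μUI ≤ eLpNorm (⇑g) 2 μUI :=
    eLpNorm_le_eLpNorm_of_exponent_le (by norm_num) hm
  have hfin : eLpNorm (⇑g) 2 μUI ≠ ⊤ := (Lp.memLp g).eLpNorm_ne_top
  have e1 : ∫ x, |g x| ∂μUI = (eLpNorm (⇑g) 1 μUI).toReal := by
    rw [eLpNorm_one_eq_lintegral_enorm]
    simpa [Real.norm_eq_abs] using integral_norm_eq_lintegral_enorm hm
  rw [e1, Lp.norm_def]
  exact ENNReal.toReal_mono hfin h12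

lemma quadForm_abs_le {V : UI → UI → ℝ} (hVm : Measurable (uncurry V))
    (hVb : ∀ x y, |V x y| ≤ 1) (g : Lp ℝ 2 μUI) :
    |quadForm V g| ≤ ‖g‖ * ‖g‖ := by
  rw [quadForm_eq_BB hVm hVb]
  have hg : Integrable (⇑g) μUI := (Lp.memLp g).integrable one_le_two
  refine (BB_le hVm hVb hg hg).trans ?_
  have h1 := int_abs_le_norm g
  have h2 : 0 ≤ ∫ x, |g x| ∂μUI := integral_nonneg fun x => abs_nonneg _
  nlinarith

lemma quadForm_lip {V : UI → UI → ℝ} (hVm : Measurable (uncurry V))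
    (hVb : ∀ x y, |V x y| ≤ 1) (g h : Lp ℝ 2 μUI) :
    |quadForm V g - quadForm V h| ≤ ‖g - h‖ * (‖g‖ + ‖h‖) := by
  rw [quadForm_eq_BB hVm hVb, quadForm_eq_BB hVm hVb]
  have hg : Integrable (⇑g) μUI := (Lp.memLp g).integrable one_le_two
  have hh : Integrable (⇑h) μUI := (Lp.memLp h).integrable one_le_two
  have key := BB_diff hVm hVb hg hh
  have e1 : ∫ x, |g x - h x| ∂μUI ≤ ‖g - h‖ := by
    have hsub : ⇑(g - h) =ᵐ[μUI] ⇑g - ⇑h := Lp.coeFn_sub g h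
    have : ∫ x, |g x - h x| ∂μUI = ∫ x, |(g - h) x| ∂μUI := by
      refine integral_congr_ae ?_
      filter_upwards [hsub] with x hx
      rw [hx]; rfl
    rw [this]
    exact int_abs_le_norm (g - h)
  have e2 := int_abs_le_norm g
  have e3 := int_abs_le_norm h
  have h2 : 0 ≤ ∫ x, |g x - h x| ∂μUI := integral_nonneg fun x => abs_nonneg _
  have h3 : 0 ≤ ∫ x, |g x| ∂μUI := integral_nonneg fun x => abs_nonneg _
  have h4 : 0 ≤ ∫ x, |h x| ∂μUI := integral_nonneg fun x => abs_nonneg _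
  have h5 : (0:ℝ) ≤ ‖g - h‖ := norm_nonneg _
  calc |BB V ⇑g ⇑g - BB V ⇑h ⇑h| ≤
      (∫ x, |g x - h x| ∂μUI) * ((∫ x, |g x| ∂μUI) + (∫ x, |h x| ∂μUI)) := key
    _ ≤ ‖g - h‖ * (‖g‖ + ‖h‖) := by nlinarith [norm_nonneg g, norm_nonneg h]

end SpectraAux
namespace SpectraAux

open Function Filter

lemma BB_add_left {V : UI → UI → ℝ} (hVm : Measurable (uncurry V)) (hVb : ∀ x y, |V x y| ≤ 1)
    {f₁ f₂ g : UI → ℝ} (h₁ : Integrable f₁ μUI) (h₂ : Integrable f₂ μUI)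
    (hg : Integrable g μUI) :
    BB V (f₁ + f₂) g = BB V f₁ g + BB V f₂ g := by
  unfold BB
  rw [← integral_add (integrable_BB hVm hVb h₁ hg) (integrable_BB hVm hVb h₂ hg)]
  congr 1; funext z
  simp only [Pi.add_apply]; ring

lemma BB_add_right {V : UI → UI → ℝ} (hVm : Measurable (uncurry V)) (hVb : ∀ x y, |V x y| ≤ 1)
    {f g₁ g₂ : UI → ℝ} (hf : Integrable f μUI) (h₁ : Integrable g₁ μUI)
    (h₂ : Integrable g₂ μUI) :
    BB V f (g₁ + g₂) = BB V f g₁ + BB V f g₂ := by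
  unfold BB
  rw [← integral_add (integrable_BB hVm hVb hf h₁) (integrable_BB hVm hVb hf h₂)]
  congr 1; funext z
  simp only [Pi.add_apply]; ring

lemma simpleFunc_integrable (s : SimpleFunc UI ℝ) : Integrable (⇑s) μUI := by
  obtain ⟨C, hC⟩ := s.exists_forall_norm_le
  exact integrable_of_bdd s.measurable.aestronglyMeasurable
    (fun x => by simpa [Real.norm_eq_abs] using hC x)

lemma indicator_integrable {S : Set UI} (hS : MeasurableSet S) (c : ℝ) :
    Integrable (S.indicator fun _ => c) μUI := by
  refine integrable_of_bdd ((measurable_const.indicator hS).aestronglyMeasurable) (C := |c|) ?_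
  intro x
  by_cases h : x ∈ S <;> simp [Set.indicator_of_mem, Set.indicator_of_notMem, h, abs_nonneg]

lemma BB_indicator {V : UI → UI → ℝ} (hVm : Measurable (uncurry V)) (hVb : ∀ x y, |V x y| ≤ 1)
    {S T : Set UI} (hS : MeasurableSet S) (hT : MeasurableSet T) (c d : ℝ) :
    BB V (S.indicator fun _ => c) (T.indicator fun _ => d)
      = (c * d) * ∫ x in S, ∫ y in T, V x y := by
  have hfun : (fun z : UI × UI => V z.1 z.2 * (S.indicator (fun _ => c) z.1)
        * (T.indicator (fun _ => d) z.2))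
      = (S ×ˢ T).indicator (fun z : UI × UI => V z.1 z.2 * c * d) := by
    funext z
    by_cases h1 : z.1 ∈ S <;> by_cases h2 : z.2 ∈ T <;>
      simp [Set.indicator_of_mem, Set.indicator_of_notMem, h1, h2, Set.mem_prod]
  have hVint : Integrable (uncurry V) ((μUI.restrict S).prod (μUI.restrict T)) := by
    refine Integrable.mono' (integrable_const 1) hVm.aestronglyMeasurable
      (Filter.Eventually.of_forall fun z => ?_)
    simpa [Real.norm_eq_abs, uncurry] using hVb z.1 z.2
  have hres : ∫ z in S ×ˢ T, V z.1 z.2 ∂(μUI.prod μUI) = ∫ x in S, ∫ y in T, V x y := by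
    rw [← Measure.prod_restrict]
    exact (integral_integral hVint).symm
  unfold BB
  rw [hfun, integral_indicator (hS.prod hT)]
  have : ∫ z in S ×ˢ T, V z.1 z.2 * c * d ∂(μUI.prod μUI)
      = (∫ z in S ×ˢ T, V z.1 z.2 ∂(μUI.prod μUI)) * c * d := by
    rw [integral_mul_const, integral_mul_const]
  rw [this, hres]; ring

section conv

variable {Vn : ℕ → UI → UI → ℝ} {U : UI → UI → ℝ}

lemma coe_piecewise_eq (T : Set UI) (hT : MeasurableSet T) (d : ℝ) :
    ⇑(SimpleFunc.piecewise T hT (SimpleFunc.const UI d) (SimpleFunc.const UI 0))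
      = T.indicator fun _ => d := by
  funext x
  by_cases h : x ∈ T <;> simp [SimpleFunc.piecewise_apply, h, Set.indicator_of_mem,
    Set.indicator_of_notMem]

lemma tendsto_BB_ind (hVnm : ∀ n, Measurable (uncurry (Vn n)))
    (hVnb : ∀ n x y, |Vn n x y| ≤ 1)
    (hUm : Measurable (uncurry U)) (hUb : ∀ x y, |U x y| ≤ 1)
    (hconv : WeakStarTendsto Vn U)
    {S T : Set UI} (hS : MeasurableSet S) (hT : MeasurableSet T) (c d : ℝ) :
    Tendsto (fun n => BB (Vn n) (S.indicator fun _ => c) (T.indicator fun _ => d)) atTop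
      (nhds (BB U (S.indicator fun _ => c) (T.indicator fun _ => d))) := by
  have e1 : ∀ n, BB (Vn n) (S.indicator fun _ => c) (T.indicator fun _ => d)
      = (c * d) * ∫ x in S, ∫ y in T, Vn n x y := fun n =>
    BB_indicator (hVnm n) (hVnb n) hS hT c d
  rw [BB_indicator hUm hUb hS hT c d]
  simp only [e1]
  exact (hconv S T hS hT).const_mul (c * d)

lemma tendsto_BB_simple (hVnm : ∀ n, Measurable (uncurry (Vn n)))
    (hVnb : ∀ n x y, |Vn n x y| ≤ 1)
    (hUm : Measurable (uncurry U)) (hUb : ∀ x y, |U x y| ≤ 1)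
    (hconv : WeakStarTendsto Vn U) (s t : SimpleFunc UI ℝ) :
    Tendsto (fun n => BB (Vn n) ⇑s ⇑t) atTop (nhds (BB U ⇑s ⇑t)) := by
  induction s using SimpleFunc.induction with
  | @const c S hS =>
    rw [coe_piecewise_eq S hS c]
    -- induct on t
    induction t using SimpleFunc.induction with
    | @const d T hT =>
      rw [coe_piecewise_eq T hT d]
      exact tendsto_BB_ind hVnm hVnb hUm hUb hconv hS hT c d
    | @add t₁ t₂ hdisj ih₁ ih₂ =>
      have hco : ⇑(t₁ + t₂) = ⇑t₁ + ⇑t₂ := SimpleFunc.coe_add t₁ t₂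
      rw [hco]
      have hi := indicator_integrable hS c
      have e : ∀ V : UI → UI → ℝ, Measurable (uncurry V) → (∀ x y, |V x y| ≤ 1) →
          BB V (S.indicator fun _ => c) (⇑t₁ + ⇑t₂)
          = BB V (S.indicator fun _ => c) ⇑t₁ + BB V (S.indicator fun _ => c) ⇑t₂ :=
        fun V hVm hVb => BB_add_right hVm hVb hi (simpleFunc_integrable t₁)
          (simpleFunc_integrable t₂)
      rw [e U hUm hUb]
      simp only [fun n => e (Vn n) (hVnm n) (hVnb n)]
      exact ih₁.add ih₂
  | @add s₁ s₂ hdisj ih₁ ih₂ =>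
    have hco : ⇑(s₁ + s₂) = ⇑s₁ + ⇑s₂ := SimpleFunc.coe_add s₁ s₂
    rw [hco]
    have e : ∀ V : UI → UI → ℝ, Measurable (uncurry V) → (∀ x y, |V x y| ≤ 1) →
        BB V (⇑s₁ + ⇑s₂) ⇑t = BB V ⇑s₁ ⇑t + BB V ⇑s₂ ⇑t :=
      fun V hVm hVb => BB_add_left hVm hVb (simpleFunc_integrable s₁)
        (simpleFunc_integrable s₂) (simpleFunc_integrable t)
    rw [e U hUm hUb]
    simp only [fun n => e (Vn n) (hVnm n) (hVnb n)]
    exact ih₁.add ih₂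

end conv

end SpectraAux
namespace SpectraAux

open Function Filter

section conv2

variable {Vn : ℕ → UI → UI → ℝ} {U : UI → UI → ℝ}

instance : Fact ((1:ENNReal) ≤ 2) := ⟨one_le_two⟩

lemma tendsto_quadForm (hVnm : ∀ n, Measurable (uncurry (Vn n)))
    (hVnb : ∀ n x y, |Vn n x y| ≤ 1)
    (hUm : Measurable (uncurry U)) (hUb : ∀ x y, |U x y| ≤ 1)
    (hconv : WeakStarTendsto Vn U) (g : Lp ℝ 2 μUI) :
    Tendsto (fun n => quadForm (Vn n) g) atTop (nhds (quadForm U g)) := by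
  rw [Metric.tendsto_atTop]
  intro ε hε
  set δ : ℝ := min 1 (ε / (3 * (2 * ‖g‖ + 2))) with hδdef
  have hg0 : (0:ℝ) ≤ ‖g‖ := norm_nonneg g
  have hδpos : 0 < δ := by
    apply lt_min one_pos
    positivity
  have hδ1 : δ ≤ 1 := min_le_left _ _
  have hδ2 : δ * (2 * ‖g‖ + 2) ≤ ε / 3 := by
    have h2 : δ ≤ ε / (3 * (2 * ‖g‖ + 2)) := min_le_right _ _
    have h3 : (0:ℝ) < 2 * ‖g‖ + 2 := by positivity
    calc δ * (2 * ‖g‖ + 2) ≤ ε / (3 * (2 * ‖g‖ + 2)) * (2 * ‖g‖ + 2) := by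
          exact mul_le_mul_of_nonneg_right h2 h3.le
      _ = ε / 3 := by field_simp
  -- choose a simple function close to g
  obtain ⟨φ, hφ⟩ := (Lp.simpleFunc.denseRange (E := ℝ) (p := 2) (μ := μUI)
    (by norm_num)).exists_dist_lt g hδpos
  set s : SimpleFunc UI ℝ := Lp.simpleFunc.toSimpleFunc φ with hsdef
  have hs : ⇑s =ᵐ[μUI] ⇑(φ : Lp ℝ 2 μUI) := Lp.simpleFunc.toSimpleFunc_eq_toFun φ
  have hdist : ‖g - (φ : Lp ℝ 2 μUI)‖ < δ := by rwa [← dist_eq_norm]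
  have hφnorm : ‖(φ : Lp ℝ 2 μUI)‖ ≤ ‖g‖ + δ := by
    have := abs_norm_sub_norm_le (φ : Lp ℝ 2 μUI) g
    rw [abs_le] at this
    have h2 := this.1
    rw [norm_sub_rev] at this
    linarith [this.1, hdist]
  -- quadForm at φ equals BB at s
  have hqs : ∀ (V : UI → UI → ℝ), Measurable (uncurry V) → (∀ x y, |V x y| ≤ 1) →
      quadForm V (φ : Lp ℝ 2 μUI) = BB V ⇑s ⇑s := by
    intro V hVm hVb
    rw [quadForm_eq_BB hVm hVb]
    exact (BB_congr hs hs).symm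
  -- convergence at s
  have hsimple := tendsto_BB_simple hVnm hVnb hUm hUb hconv s s
  rw [Metric.tendsto_atTop] at hsimple
  obtain ⟨N, hN⟩ := hsimple (ε / 3) (by positivity)
  refine ⟨N, fun n hn => ?_⟩
  have h1 : |quadForm (Vn n) g - quadForm (Vn n) (φ : Lp ℝ 2 μUI)| ≤ ε / 3 := by
    refine (quadForm_lip (hVnm n) (hVnb n) g _).trans ?_
    have := mul_le_mul hdist.le (by linarith : ‖g‖ + ‖(φ : Lp ℝ 2 μUI)‖ ≤ 2 * ‖g‖ + 2)
      (by positivity) hδpos.le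
    calc ‖g - (φ : Lp ℝ 2 μUI)‖ * (‖g‖ + ‖(φ : Lp ℝ 2 μUI)‖)
        ≤ δ * (2 * ‖g‖ + 2) := this
      _ ≤ ε / 3 := hδ2
  have h3 : |quadForm U (φ : Lp ℝ 2 μUI) - quadForm U g| ≤ ε / 3 := by
    rw [abs_sub_comm]
    refine (quadForm_lip hUm hUb g _).trans ?_
    have := mul_le_mul hdist.le (by linarith : ‖g‖ + ‖(φ : Lp ℝ 2 μUI)‖ ≤ 2 * ‖g‖ + 2)
      (by positivity) hδpos.le
    calc ‖g - (φ : Lp ℝ 2 μUI)‖ * (‖g‖ + ‖(φ : Lp ℝ 2 μUI)‖)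
        ≤ δ * (2 * ‖g‖ + 2) := this
      _ ≤ ε / 3 := hδ2
  have h2 : |quadForm (Vn n) (φ : Lp ℝ 2 μUI) - quadForm U (φ : Lp ℝ 2 μUI)| < ε / 3 := by
    rw [hqs (Vn n) (hVnm n) (hVnb n), hqs U hUm hUb]
    have := hN n hn
    rwa [Real.dist_eq] at this
  rw [Real.dist_eq]
  calc |quadForm (Vn n) g - quadForm U g|
      ≤ |quadForm (Vn n) g - quadForm (Vn n) (φ : Lp ℝ 2 μUI)|
        + |quadForm (Vn n) (φ : Lp ℝ 2 μUI) - quadForm U g| := abs_sub_le _ _ _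
    _ ≤ |quadForm (Vn n) g - quadForm (Vn n) (φ : Lp ℝ 2 μUI)|
        + (|quadForm (Vn n) (φ : Lp ℝ 2 μUI) - quadForm U (φ : Lp ℝ 2 μUI)|
          + |quadForm U (φ : Lp ℝ 2 μUI) - quadForm U g|) := by
        linarith [abs_sub_le (quadForm (Vn n) (φ : Lp ℝ 2 μUI))
          (quadForm U (φ : Lp ℝ 2 μUI)) (quadForm U g)]
    _ < ε := by linarith

end conv2

end SpectraAux
namespace SpectraAux

open Function Filter

/-- The measurable equivalence associated to a measure-preserving bijection of `[0,1]`. -/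
def MPBequiv (π : MPB) : UI ≃ᵐ UI where
  toEquiv := Equiv.ofBijective π.toFun π.bijective
  measurable_toFun := π.measurePreserving.measurable
  measurable_invFun := by
    have hemb : MeasurableEmbedding π.toFun :=
      π.measurePreserving.measurable.measurableEmbedding π.bijective.injective
    have hcomp : π.toFun ∘ (Equiv.ofBijective π.toFun π.bijective).symm = id := by
      funext x
      exact (Equiv.ofBijective π.toFun π.bijective).apply_symm_apply x
    have : Measurable (π.toFun ∘ (Equiv.ofBijective π.toFun π.bijective).symm) := by
      rw [hcomp]; exact measurable_id
    exact hemb.measurable_comp_iff.mp this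

lemma coe_MPBequiv (π : MPB) : ⇑(MPBequiv π) = π.toFun := rfl

lemma mpEq (π : MPB) : MeasurePreserving (⇑(MPBequiv π)) μUI μUI := π.measurePreserving

lemma mpSymm (π : MPB) : MeasurePreserving (⇑(MPBequiv π).symm) μUI μUI :=
  MeasurePreserving.symm (MPBequiv π) (mpEq π)

/-- Composition with `π⁻¹` as a linear map on `L²`. -/
def Tinv (π : MPB) : Lp ℝ 2 μUI →ₗ[ℝ] Lp ℝ 2 μUI :=
  Lp.compMeasurePreservingₗ ℝ (⇑(MPBequiv π).symm) (mpSymm π)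

/-- Composition with `π` as a linear map on `L²`. -/
def Tfwd (π : MPB) : Lp ℝ 2 μUI →ₗ[ℝ] Lp ℝ 2 μUI :=
  Lp.compMeasurePreservingₗ ℝ π.toFun π.measurePreserving

lemma Tinv_apply (π : MPB) (g : Lp ℝ 2 μUI) :
    Tinv π g = Lp.compMeasurePreserving (⇑(MPBequiv π).symm) (mpSymm π) g := rfl

lemma Tfwd_apply (π : MPB) (g : Lp ℝ 2 μUI) :
    Tfwd π g = Lp.compMeasurePreserving π.toFun π.measurePreserving g := rfl

lemma norm_Tinv (π : MPB) (g : Lp ℝ 2 μUI) : ‖Tinv π g‖ = ‖g‖ := by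
  rw [Tinv_apply]; exact Lp.norm_compMeasurePreserving g _

lemma coeFn_Tinv (π : MPB) (g : Lp ℝ 2 μUI) :
    ⇑(Tinv π g) =ᵐ[μUI] ⇑g ∘ ⇑(MPBequiv π).symm := by
  rw [Tinv_apply]; exact Lp.coeFn_compMeasurePreserving g _

lemma Tfwd_Tinv (π : MPB) (g : Lp ℝ 2 μUI) : Tfwd π (Tinv π g) = g := by
  apply Lp.ext
  have h1 : ⇑(Tfwd π (Tinv π g)) =ᵐ[μUI] ⇑(Tinv π g) ∘ π.toFun := by
    rw [Tfwd_apply]; exact Lp.coeFn_compMeasurePreserving _ _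
  have h2 : ⇑(Tinv π g) ∘ π.toFun =ᵐ[μUI] (⇑g ∘ ⇑(MPBequiv π).symm) ∘ π.toFun :=
    π.measurePreserving.quasiMeasurePreserving.ae_eq_comp (coeFn_Tinv π g)
  have h3 : (⇑g ∘ ⇑(MPBequiv π).symm) ∘ π.toFun = ⇑g := by
    funext x
    simp only [Function.comp_apply]
    congr 1
    exact (MPBequiv π).symm_apply_apply x
  exact h1.trans (h2.trans (by rw [h3]))

lemma quadForm_vers (W : UI → UI → ℝ) (hWm : Measurable (uncurry W))
    (hWb : ∀ x y, |W x y| ≤ 1) (π : MPB) (g : Lp ℝ 2 μUI) :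
    quadForm (vers W π.toFun) g = quadForm W (Tinv π g) := by
  have hVm : Measurable (uncurry (vers W π.toFun)) := by
    have : uncurry (vers W π.toFun)
        = uncurry W ∘ (fun z : UI × UI => (π.toFun z.1, π.toFun z.2)) := rfl
    rw [this]
    exact hWm.comp ((π.measurePreserving.measurable.comp measurable_fst).prodMk
      (π.measurePreserving.measurable.comp measurable_snd))
  have hVb : ∀ x y, |vers W π.toFun x y| ≤ 1 := fun x y => hWb _ _
  rw [quadForm_eq_BB hVm hVb, quadForm_eq_BB hWm hWb]
  have hcongr : BB W ⇑(Tinv π g) ⇑(Tinv π g) = BB W (⇑g ∘ ⇑(MPBequiv π).symm) (⇑g ∘ ⇑(MPBequiv π).symm) :=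
    BB_congr (coeFn_Tinv π g) (coeFn_Tinv π g)
  rw [hcongr]
  unfold BB
  have hmp : MeasurePreserving (fun z : UI × UI => (π.toFun z.1, π.toFun z.2))
      (μUI.prod μUI) (μUI.prod μUI) := by
    have := π.measurePreserving.prod π.measurePreserving
    exact this
  have hemb : MeasurableEmbedding (fun z : UI × UI => (π.toFun z.1, π.toFun z.2)) := by
    have := ((MPBequiv π).prodCongr (MPBequiv π)).measurableEmbedding
    convert this using 1
    rfl
  rw [← hmp.integral_comp hemb
    (fun w : UI × UI => W w.1 w.2 * (⇑g ∘ ⇑(MPBequiv π).symm) w.1 * (⇑g ∘ ⇑(MPBequiv π).symm) w.2)]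
  congr 1
  funext z
  simp only [Function.comp_apply, vers]
  rw [show (MPBequiv π).symm (π.toFun z.1) = z.1 from (MPBequiv π).symm_apply_apply z.1,
    show (MPBequiv π).symm (π.toFun z.2) = z.2 from (MPBequiv π).symm_apply_apply z.2]

end SpectraAux
namespace SpectraAux

open Function Filter

/-- The inner infimum in the definition of `lamPlus`. -/
def innerInf (V : UI → UI → ℝ) (H : Submodule ℝ (Lp ℝ 2 μUI)) : ℝ :=
  ⨅ g : {g : Lp ℝ 2 μUI // g ∈ H ∧ ‖g‖ = 1}, quadForm V g.1

lemma lamPlus_eq (V : UI → UI → ℝ) (k : ℕ) :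
    lamPlus V k = ⨆ H : {H : Submodule ℝ (Lp ℝ 2 μUI) // Module.finrank ℝ H = k},
      innerInf V H.1 := rfl

lemma inner_nonempty {H : Submodule ℝ (Lp ℝ 2 μUI)} {k : ℕ}
    (hH : Module.finrank ℝ H = k) (hk : 1 ≤ k) :
    Nonempty {g : Lp ℝ 2 μUI // g ∈ H ∧ ‖g‖ = 1} := by
  have hne : H ≠ ⊥ := by
    intro h
    rw [h, finrank_bot] at hH
    omega
  obtain ⟨v, hvH, hv0⟩ := Submodule.ne_bot_iff H |>.mp hne
  refine ⟨⟨(‖v‖⁻¹ : ℝ) • v, H.smul_mem _ hvH, ?_⟩⟩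
  simpa using norm_smul_inv_norm (𝕜 := ℝ) hv0

lemma bddBelow_inner {V : UI → UI → ℝ} (hVm : Measurable (uncurry V))
    (hVb : ∀ x y, |V x y| ≤ 1) (H : Submodule ℝ (Lp ℝ 2 μUI)) :
    BddBelow (Set.range fun i : {g : Lp ℝ 2 μUI // g ∈ H ∧ ‖g‖ = 1} => quadForm V i.1) := by
  refine ⟨-1, ?_⟩
  rintro _ ⟨i, rfl⟩
  have := quadForm_abs_le hVm hVb i.1
  rw [i.2.2] at this
  have := abs_le.mp (by simpa using this)
  linarith [this.1]

lemma innerInf_le_one {V : UI → UI → ℝ} (hVm : Measurable (uncurry V))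
    (hVb : ∀ x y, |V x y| ≤ 1) {H : Submodule ℝ (Lp ℝ 2 μUI)} {k : ℕ}
    (hH : Module.finrank ℝ H = k) (hk : 1 ≤ k) : innerInf V H ≤ 1 := by
  have hne := inner_nonempty hH hk
  obtain ⟨i⟩ := hne
  refine (ciInf_le (bddBelow_inner hVm hVb H) i).trans ?_
  have := quadForm_abs_le hVm hVb i.1
  rw [i.2.2] at this
  have := abs_le.mp (by simpa using this)
  linarith [this.2]

lemma bddAbove_outer {V : UI → UI → ℝ} (hVm : Measurable (uncurry V))
    (hVb : ∀ x y, |V x y| ≤ 1) {k : ℕ} (hk : 1 ≤ k) :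
    BddAbove (Set.range fun H : {H : Submodule ℝ (Lp ℝ 2 μUI) // Module.finrank ℝ H = k} =>
      innerInf V H.1) := by
  refine ⟨1, ?_⟩
  rintro _ ⟨H, rfl⟩
  exact innerInf_le_one hVm hVb H.2 hk

lemma finrank_map_Tinv (π : MPB) {k : ℕ} (hk : 1 ≤ k)
    {H : Submodule ℝ (Lp ℝ 2 μUI)} (hH : Module.finrank ℝ H = k) :
    Module.finrank ℝ (H.map (Tinv π)) = k := by
  have hfd : FiniteDimensional ℝ H := FiniteDimensional.of_finrank_pos (by omega)
  have hcomp : (Tfwd π).comp (Tinv π) = LinearMap.id := by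
    apply LinearMap.ext
    intro g
    simpa using Tfwd_Tinv π g
  have h2 : (H.map (Tinv π)).map (Tfwd π) = H := by
    rw [← Submodule.map_comp, hcomp, Submodule.map_id]
  have le1 : Module.finrank ℝ (H.map (Tinv π)) ≤ Module.finrank ℝ H :=
    Submodule.finrank_map_le (Tinv π) H
  have hfd2 : FiniteDimensional ℝ (H.map (Tinv π)) := Module.Finite.map H (Tinv π)
  have le2 : Module.finrank ℝ H ≤ Module.finrank ℝ (H.map (Tinv π)) := by
    conv_lhs => rw [← h2]
    exact Submodule.finrank_map_le (Tfwd π) (H.map (Tinv π))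
  omega

lemma innerInf_vers (W : UI → UI → ℝ) (hWm : Measurable (uncurry W))
    (hWb : ∀ x y, |W x y| ≤ 1) (π : MPB) {k : ℕ} (hk : 1 ≤ k)
    {H : Submodule ℝ (Lp ℝ 2 μUI)} (hH : Module.finrank ℝ H = k) :
    innerInf (vers W π.toFun) H = innerInf W (H.map (Tinv π)) := by
  have hVm : Measurable (uncurry (vers W π.toFun)) := by
    have : uncurry (vers W π.toFun)
        = uncurry W ∘ (fun z : UI × UI => (π.toFun z.1, π.toFun z.2)) := rfl
    rw [this]
    exact hWm.comp ((π.measurePreserving.measurable.comp measurable_fst).prodMk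
      (π.measurePreserving.measurable.comp measurable_snd))
  have hVb : ∀ x y, |vers W π.toFun x y| ≤ 1 := fun x y => hWb _ _
  have hne1 := inner_nonempty hH hk
  have hne2 := inner_nonempty (finrank_map_Tinv π hk hH) hk
  apply le_antisymm
  · -- innerInf (vers W π) H ≤ innerInf W (H.map Tinv)
    refine le_ciInf fun j => ?_
    obtain ⟨g, hgH, hTg⟩ := Submodule.mem_map.mp j.2.1
    have hg1 : ‖g‖ = 1 := by
      have := norm_Tinv π g
      rw [hTg] at this
      rw [← this, j.2.2]
    have : quadForm (vers W π.toFun) g = quadForm W j.1 := by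
      rw [quadForm_vers W hWm hWb π g]
      rw [show Tinv π g = j.1 from hTg]
    calc innerInf (vers W π.toFun) H
        ≤ quadForm (vers W π.toFun) g := ciInf_le (bddBelow_inner hVm hVb H) ⟨g, hgH, hg1⟩
      _ = quadForm W j.1 := this
  · refine le_ciInf fun i => ?_
    have hmem : Tinv π i.1 ∈ H.map (Tinv π) := Submodule.mem_map_of_mem i.2.1
    have hn : ‖Tinv π i.1‖ = 1 := by rw [norm_Tinv, i.2.2]
    calc innerInf W (H.map (Tinv π))
        ≤ quadForm W (Tinv π i.1) :=
          ciInf_le (bddBelow_inner hWm hWb _) ⟨Tinv π i.1, hmem, hn⟩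
      _ = quadForm (vers W π.toFun) i.1 := (quadForm_vers W hWm hWb π i.1).symm

lemma sphere_compact (H : Submodule ℝ (Lp ℝ 2 μUI)) [FiniteDimensional ℝ H] :
    IsCompact {g : Lp ℝ 2 μUI | g ∈ H ∧ ‖g‖ = 1} := by
  have h1 : IsCompact (Metric.sphere (0 : H) 1) := isCompact_sphere _ _
  have h2 := h1.image continuous_subtype_val
  have he : {g : Lp ℝ 2 μUI | g ∈ H ∧ ‖g‖ = 1}
      = Subtype.val '' (Metric.sphere (0 : H) 1) := by
    ext g
    constructor
    · rintro ⟨hgH, hg1⟩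
      refine ⟨⟨g, hgH⟩, ?_, rfl⟩
      rw [mem_sphere_zero_iff_norm, Submodule.coe_norm]
      exact hg1
    · rintro ⟨⟨h, hh⟩, hs, rfl⟩
      rw [mem_sphere_zero_iff_norm, Submodule.coe_norm] at hs
      exact ⟨hh, hs⟩
  rw [he]
  exact h2

end SpectraAux
namespace SpectraAux

open Function Filter

lemma vers_measurable {W : UI → UI → ℝ} (hWm : Measurable (uncurry W)) (π : MPB) :
    Measurable (uncurry (vers W π.toFun)) := by
  have : uncurry (vers W π.toFun)
      = uncurry W ∘ (fun z : UI × UI => (π.toFun z.1, π.toFun z.2)) := rfl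
  rw [this]
  exact hWm.comp ((π.measurePreserving.measurable.comp measurable_fst).prodMk
    (π.measurePreserving.measurable.comp measurable_snd))

/-- The main monotonicity lemma for `lamPlus`. -/
lemma main_lamPlus (U W : UI → UI → ℝ)
    (hUm : Measurable (uncurry U)) (hUb : ∀ x y, |U x y| ≤ 1)
    (hWm : Measurable (uncurry W)) (hWb : ∀ x y, |W x y| ≤ 1)
    (π : ℕ → MPB) (hconv : WeakStarTendsto (fun n => vers W (π n).toFun) U)
    (k : ℕ) (hk : 1 ≤ k) : lamPlus U k ≤ lamPlus W k := by
  by_cases hne : Nonempty {H : Submodule ℝ (Lp ℝ 2 μUI) // Module.finrank ℝ H = k}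
  swap
  · haveI := not_nonempty_iff.mp hne
    rw [lamPlus_eq, lamPlus_eq, Real.iSup_of_isEmpty, Real.iSup_of_isEmpty]
  rw [lamPlus_eq, lamPlus_eq]
  set Vn : ℕ → UI → UI → ℝ := fun n => vers W (π n).toFun with hVndef
  have hVnm : ∀ n, Measurable (uncurry (Vn n)) := fun n => vers_measurable hWm (π n)
  have hVnb : ∀ n x y, |Vn n x y| ≤ 1 := fun n x y => hWb _ _
  refine ciSup_le fun Hs => ?_
  obtain ⟨H, hH⟩ := Hs
  simp only
  refine le_of_forall_pos_le_add fun ε hε => ?_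
  haveI hfd : FiniteDimensional ℝ H := FiniteDimensional.of_finrank_pos (by omega)
  have hcomp := sphere_compact H
  set S : Set (Lp ℝ 2 μUI) := {g | g ∈ H ∧ ‖g‖ = 1} with hSdef
  -- finite net
  obtain ⟨t, htS, hcover⟩ := hcomp.elim_nhds_subcover (fun x => Metric.ball x (ε / 8))
    (fun x _ => Metric.ball_mem_nhds x (by positivity))
  -- eventually close at the net points
  have hev : ∀ᶠ n in atTop, ∀ x ∈ t, |quadForm (Vn n) x - quadForm U x| < ε / 2 := by
    rw [Filter.eventually_all_finset]
    intro x hx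
    have htd := tendsto_quadForm hVnm hVnb hUm hUb hconv x
    rw [Metric.tendsto_atTop] at htd
    obtain ⟨N, hN⟩ := htd (ε / 2) (by positivity)
    rw [Filter.eventually_atTop]
    exact ⟨N, fun n hn => by have := hN n hn; rwa [Real.dist_eq] at this⟩
  obtain ⟨n, hn⟩ := hev.exists
  -- uniform closeness on the sphere
  have hunif : ∀ g ∈ S, quadForm U g ≤ quadForm (Vn n) g + ε := by
    intro g hgS
    have hgball := hcover hgS
    rw [Set.mem_iUnion₂] at hgball
    obtain ⟨x, hxt, hxball⟩ := hgball
    have hxS : x ∈ S := htS x hxt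
    have hg1 : ‖g‖ = 1 := hgS.2
    have hx1 : ‖x‖ = 1 := hxS.2
    have hd : ‖g - x‖ < ε / 8 := by
      rw [Metric.mem_ball, dist_eq_norm] at hxball
      exact hxball
    have l1 : |quadForm U g - quadForm U x| ≤ ε / 4 := by
      refine (quadForm_lip hUm hUb g x).trans ?_
      rw [hg1, hx1]
      nlinarith [norm_nonneg (g - x)]
    have l2 : |quadForm (Vn n) x - quadForm (Vn n) g| ≤ ε / 4 := by
      refine (quadForm_lip (hVnm n) (hVnb n) x g).trans ?_
      rw [hg1, hx1, norm_sub_rev]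
      nlinarith [norm_nonneg (g - x)]
    have l3 := hn x hxt
    have a1 := abs_le.mp l1
    have a2 := abs_le.mp l2
    have a3 := abs_le.mp l3.le
    linarith [a1.1, a2.1, a3.1]
  -- innerInf U H ≤ innerInf (Vn n) H + ε
  haveI hne1 := inner_nonempty hH hk
  have step1 : innerInf U H ≤ innerInf (Vn n) H + ε := by
    have : innerInf U H - ε ≤ innerInf (Vn n) H := by
      refine le_ciInf fun i => ?_
      have hiS : i.1 ∈ S := ⟨i.2.1, i.2.2⟩
      have h1 : innerInf U H ≤ quadForm U i.1 := ciInf_le (bddBelow_inner hUm hUb H) i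
      have h2 := hunif i.1 hiS
      linarith
    linarith
  have step2 : innerInf (Vn n) H = innerInf W (H.map (Tinv (π n))) :=
    innerInf_vers W hWm hWb (π n) hk hH
  have step3 : innerInf W (H.map (Tinv (π n))) ≤
      ⨆ Hs : {H : Submodule ℝ (Lp ℝ 2 μUI) // Module.finrank ℝ H = k}, innerInf W Hs.1 :=
    le_ciSup (bddAbove_outer hWm hWb hk) ⟨H.map (Tinv (π n)), finrank_map_Tinv (π n) hk hH⟩
  linarith

lemma myInfNeg {ι : Sort*} (f : ι → ℝ) : ⨅ i, (- f i) = - ⨆ i, f i := by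
  rw [iInf, iSup, Real.sInf_def]
  congr 1
  congr 1
  ext x
  simp only [Set.mem_neg, Set.mem_range]
  constructor
  · rintro ⟨i, hi⟩
    exact ⟨i, by linarith⟩
  · rintro ⟨i, hi⟩
    exact ⟨i, by linarith⟩

lemma mySupNeg {ι : Sort*} (f : ι → ℝ) : ⨆ i, (- f i) = - ⨅ i, f i := by
  have := myInfNeg (fun i => - f i)
  simp only [neg_neg] at this
  linarith

lemma quadForm_neg (X : UI → UI → ℝ) (g : Lp ℝ 2 μUI) :
    quadForm (fun x y => - X x y) g = - quadForm X g := by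
  unfold quadForm
  rw [← integral_neg]
  congr 1
  funext x
  rw [← integral_neg]
  congr 1
  funext y
  ring

lemma lamMinus_eq_neg (X : UI → UI → ℝ) (k : ℕ) :
    lamMinus X k = - lamPlus (fun x y => - X x y) k := by
  have h1 : lamPlus (fun x y => - X x y) k
      = ⨆ H : {H : Submodule ℝ (Lp ℝ 2 μUI) // Module.finrank ℝ H = k},
          - ⨆ g : {g : Lp ℝ 2 μUI // g ∈ H.1 ∧ ‖g‖ = 1}, quadForm X g.1 := by
    rw [lamPlus]
    refine iSup_congr fun H => ?_
    rw [← myInfNeg]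
    exact iInf_congr fun g => quadForm_neg X g.1
  rw [h1, mySupNeg, lamMinus, neg_neg]

lemma self_mem_envelope (U : UI → UI → ℝ) (hU : IsGraphon U) : U ∈ envelope U := by
  refine ⟨hU, fun _ => ⟨id, Function.bijective_id, MeasurePreserving.id _⟩, ?_⟩
  intro S T hS hT
  exact tendsto_const_nhds

end SpectraAux
/-- If `U ⪯ W` are graphons, then for every `k ≥ 1` one has
`λ_k⁺(U) ≤ λ_k⁺(W)` and `λ_k⁻(U) ≥ λ_k⁻(W)`. -/
theorem spectra_monotone_of_structLE (U W : UI → UI → ℝ)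
    (hU : IsGraphon U) (hW : IsGraphon W) (hUW : structLE U W)
    (k : ℕ) (hk : 1 ≤ k) :
    lamPlus U k ≤ lamPlus W k ∧ lamMinus W k ≤ lamMinus U k := by
  classical
  obtain ⟨-, π, hconv⟩ : U ∈ envelope W := hUW (SpectraAux.self_mem_envelope U hU)
  have hUb : ∀ x y, |U x y| ≤ 1 := fun x y => by
    have h := hU.2.2 x y
    rw [Set.mem_Icc] at h
    rw [abs_le]; constructor <;> linarith [h.1, h.2]
  have hWb : ∀ x y, |W x y| ≤ 1 := fun x y => by
    have h := hW.2.2 x y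
    rw [Set.mem_Icc] at h
    rw [abs_le]; constructor <;> linarith [h.1, h.2]
  constructor
  · exact SpectraAux.main_lamPlus U W hU.1 hUb hW.1 hWb π hconv k hk
  · rw [SpectraAux.lamMinus_eq_neg U k, SpectraAux.lamMinus_eq_neg W k]
    have hUm' : Measurable (Function.uncurry fun x y => - U x y) := by
      have : Function.uncurry (fun x y => - U x y) = fun z : UI × UI => - Function.uncurry U z :=
        rfl
      rw [this]
      exact hU.1.neg
    have hWm' : Measurable (Function.uncurry fun x y => - W x y) := by
      have : Function.uncurry (fun x y => - W x y) = fun z : UI × UI => - Function.uncurry W z :=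
        rfl
      rw [this]
      exact hW.1.neg
    have hUb' : ∀ x y, |(fun x y => - U x y) x y| ≤ 1 := fun x y => by
      simpa [abs_neg] using hUb x y
    have hWb' : ∀ x y, |(fun x y => - W x y) x y| ≤ 1 := fun x y => by
      simpa [abs_neg] using hWb x y
    have hconv' : WeakStarTendsto (fun n => vers (fun x y => - W x y) (π n).toFun)
        (fun x y => - U x y) := by
      intro S T hS hT
      have h := hconv S T hS hT
      have e : ∀ (V : UI → UI → ℝ),
          (∫ x in S, ∫ y in T, -(V x y)) = -(∫ x in S, ∫ y in T, V x y) := by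
        intro V
        simp_rw [integral_neg]
      have e2 : (fun n => ∫ x in S, ∫ y in T,
            vers (fun x y => - W x y) (π n).toFun x y)
          = fun n => -(∫ x in S, ∫ y in T, vers W (π n).toFun x y) := by
        funext n
        exact e (vers W (π n).toFun)
      rw [e2, e (fun x y => U x y)]
      exact h.neg
    have := SpectraAux.main_lamPlus (fun x y => - U x y) (fun x y => - W x y)
      hUm' hUb' hWm' hWb' π hconv' k hk
    linarith

end
end
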